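/- Let p be any probability distribution on {1,...,M_x} × {1,...,M_y} with 2 ≤ M_x ≤ M_y, let α ∈ (0,1] and γ ∈ (0, log M_x). Let ε be the unique solution in (0, 2 − 2/M_x) of (ε/2)·log[(M_x·M_y − 1)(M_x − 1)(M_y − 1)] + 3·ℋ(ε/2) = γ. If the sample size n satisfies n ≥ (2/ε²)·ln((2^{M_x·M_y} − 2)/α) — in particular if n = ⌈(2/ε²)·ln((2^{M_x·M_y} − 2)/α)⌉ — and p̂_n is the empirical distribution of an i.i.d. sample of size n from p, then Pr{ I(p̂_n) − γ ≤ I(p) ≤ I(p̂_n) + γ } ≥ 1 − α, where I denotes mutual information. -/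

import Mathlib

/-!
If the empirical distribution `p̂` is within variational distance `ε` of `p`, each of the three
entropies in `I = H(X) + H(Y) - H(X,Y)` moves by at most `qaryEntropy N (ε/2)`, `N` the size of
its alphabet: two distributions at variational distance `2T` are `T u + (1-T) r` and
`T v + (1-T) r` with a common part `r` and `u` missing a letter, mixing costs at most
`binEntropy T`, and `H(u) ≤ log (N - 1)`. By the choice of `ε` the three bounds add up to `γ`.

Otherwise `A = {p̂ > p}` is a nonempty proper subset of the alphabet with `p̂(A) - p(A) > ε/2`.
For each of the `2^(Mx My) - 2` such sets Hoeffding's inequality bounds the probability of this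
event by `exp(-n ε²/2)`, and the sample size makes the union bound at most `α`.
-/

open scoped BigOperators
open MeasureTheory

/-- `p` is a probability distribution on the finite type `α`. -/
def IsDist {α : Type*} [Fintype α] (p : α → ℝ) : Prop :=
  (∀ a, 0 ≤ p a) ∧ ∑ a, p a = 1

/-- Shannon entropy (natural logarithm, with `0 · log 0 = 0`). -/
noncomputable def entropy {α : Type*} [Fintype α] (p : α → ℝ) : ℝ :=
  -∑ a, p a * Real.log (p a)

/-- Variational distance between two distributions on the same finite set. -/
noncomputable def Vdist {α : Type*} [Fintype α] (p q : α → ℝ) : ℝ :=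
  ∑ a, |p a - q a|

/-- First marginal of a joint distribution. -/
noncomputable def margX {Mx My : ℕ} (p : Fin Mx × Fin My → ℝ) : Fin Mx → ℝ :=
  fun i => ∑ j, p (i, j)

/-- Second marginal of a joint distribution. -/
noncomputable def margY {Mx My : ℕ} (p : Fin Mx × Fin My → ℝ) : Fin My → ℝ :=
  fun j => ∑ i, p (i, j)

/-- Mutual information of a joint distribution. -/
noncomputable def mutInfo {Mx My : ℕ} (p : Fin Mx × Fin My → ℝ) : ℝ :=
  entropy (margX p) + entropy (margY p) - entropy p

/-- Binary entropy function. -/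
noncomputable def binEnt (x : ℝ) : ℝ :=
  -x * Real.log x - (1 - x) * Real.log (1 - x)

/-- The measure on a finite type induced by a (real-valued) distribution `p`. -/
noncomputable def distMeasure {α : Type*} [Fintype α] [MeasurableSpace α]
    (p : α → ℝ) : Measure α :=
  ∑ a : α, ENNReal.ofReal (p a) • Measure.dirac a

/-- The empirical distribution of the sample `Z 0 ω, …, Z (n-1) ω`. -/
noncomputable def empDist {α : Type*} [Fintype α] [DecidableEq α] {Ω : Type*} {n : ℕ}
    (Z : Fin n → Ω → α) (ω : Ω) : α → ℝ :=
  fun a => ((Finset.univ.filter fun k => Z k ω = a).card : ℝ) / n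

open Real

section Distributions

variable {α : Type*} [Fintype α] {p q : α → ℝ}

lemma IsDist.le_one (hp : IsDist p) (a : α) : p a ≤ 1 :=
  hp.2 ▸ Finset.single_le_sum (fun b _ => hp.1 b) (Finset.mem_univ a)

lemma IsDist.nonempty (hp : IsDist p) : Nonempty α := by
  by_contra h
  rw [not_nonempty_iff] at h
  simpa using hp.2

lemma Vdist_comm (p q : α → ℝ) : Vdist p q = Vdist q p :=
  Finset.sum_congr rfl fun _ _ => abs_sub_comm _ _

lemma Vdist_nonneg (p q : α → ℝ) : 0 ≤ Vdist p q :=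
  Finset.sum_nonneg fun _ _ => abs_nonneg _

lemma Vdist_eq_zero_iff (p q : α → ℝ) : Vdist p q = 0 ↔ p = q := by
  rw [Vdist, Finset.sum_eq_zero_iff_of_nonneg fun a _ => abs_nonneg _]
  simp [funext_iff, sub_eq_zero]

lemma IsDist.sum_posPart_sub (hp : IsDist p) (hq : IsDist q) :
    ∑ a, (p a - q a)⁺ = Vdist p q / 2 := by
  have hsum : ∑ a, ((p a - q a)⁺ - (p a - q a)⁻) = 0 := by
    simp only [posPart_sub_negPart, Finset.sum_sub_distrib, hp.2, hq.2, sub_self]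
  have habs : ∑ a, ((p a - q a)⁺ + (p a - q a)⁻) = Vdist p q := by
    simp only [posPart_add_negPart, Vdist]
  rw [Finset.sum_sub_distrib] at hsum
  rw [Finset.sum_add_distrib] at habs
  linarith

end Distributions

lemma posPart_sub_add_min (x y : ℝ) : (x - y)⁺ + min x y = x := by
  rcases le_total x y with h | h
  · rw [posPart_eq_zero.2 (by linarith), min_eq_left h, zero_add]
  · rw [posPart_eq_self.2 (by linarith), min_eq_right h, sub_add_cancel]

lemma negMulLog_add_le {x y : ℝ} (hx : 0 ≤ x) (hy : 0 ≤ y) :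
    negMulLog (x + y) ≤ negMulLog x + negMulLog y := by
  rcases hx.eq_or_lt with rfl | hx
  · simp
  rcases hy.eq_or_lt with rfl | hy
  · simp
  have hlx : log x ≤ log (x + y) := log_le_log hx (by linarith)
  have hly : log y ≤ log (x + y) := log_le_log hy (by linarith)
  simp only [negMulLog]
  nlinarith

lemma binEnt_eq_binEntropy : binEnt = binEntropy := by
  ext x
  simp only [binEnt, binEntropy, log_inv]
  ring

section Entropy

variable {α : Type*} [Fintype α] {p q : α → ℝ}

lemma entropy_eq_sum_negMulLog (p : α → ℝ) : entropy p = ∑ a, negMulLog (p a) := by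
  simp [entropy, negMulLog, Finset.sum_neg_distrib]

lemma entropy_nonneg (hp : IsDist p) : 0 ≤ entropy p := by
  rw [entropy_eq_sum_negMulLog]
  exact Finset.sum_nonneg fun a _ => negMulLog_nonneg (hp.1 a) (hp.le_one a)

lemma entropy_convexComb_le (hp : IsDist p) (hq : IsDist q) {c : ℝ} (hc₀ : 0 ≤ c)
    (hc₁ : c ≤ 1) :
    entropy (fun a => c * p a + (1 - c) * q a)
      ≤ c * entropy p + (1 - c) * entropy q + binEntropy c := by
  have key (a : α) : negMulLog (c * p a + (1 - c) * q a)
      ≤ (p a * negMulLog c + c * negMulLog (p a))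
        + (q a * negMulLog (1 - c) + (1 - c) * negMulLog (q a)) := by
    rw [← negMulLog_mul, ← negMulLog_mul]
    exact negMulLog_add_le (mul_nonneg hc₀ (hp.1 a)) (mul_nonneg (by linarith) (hq.1 a))
  calc entropy (fun a => c * p a + (1 - c) * q a)
      ≤ ∑ a, ((p a * negMulLog c + c * negMulLog (p a))
        + (q a * negMulLog (1 - c) + (1 - c) * negMulLog (q a))) := by
        rw [entropy_eq_sum_negMulLog]
        exact Finset.sum_le_sum fun a _ => key a
    _ = c * entropy p + (1 - c) * entropy q + binEntropy c := by
        simp only [entropy_eq_sum_negMulLog, binEntropy_eq_negMulLog_add_negMulLog_one_sub,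
          Finset.sum_add_distrib, ← Finset.sum_mul, ← Finset.mul_sum, hp.2, hq.2]
        ring

lemma le_entropy_convexComb (hp : IsDist p) (hq : IsDist q) {c : ℝ} (hc₀ : 0 ≤ c)
    (hc₁ : c ≤ 1) :
    c * entropy p + (1 - c) * entropy q ≤ entropy (fun a => c * p a + (1 - c) * q a) := by
  simp only [entropy_eq_sum_negMulLog, Finset.mul_sum, ← Finset.sum_add_distrib]
  refine Finset.sum_le_sum fun a _ => ?_
  simpa using concaveOn_negMulLog.2 (Set.mem_Ici.2 (hp.1 a)) (Set.mem_Ici.2 (hq.1 a))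
    hc₀ (by linarith : (0 : ℝ) ≤ 1 - c) (by ring)

lemma entropy_le_log_card_of_support_subset (hp : IsDist p) {s : Finset α}
    (hs : ∀ a ∉ s, p a = 0) : entropy p ≤ log s.card := by
  have hsum : ∑ a ∈ s, p a = 1 := by
    rw [← hp.2]
    exact Finset.sum_subset (Finset.subset_univ s) fun a _ ha => hs a ha
  have hcard : (0 : ℝ) < s.card := by
    rw [Nat.cast_pos, Finset.card_pos]
    by_contra h
    simp [Finset.not_nonempty_iff_eq_empty.1 h] at hsum
  have hent : entropy p = ∑ a ∈ s, negMulLog (p a) := by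
    rw [entropy_eq_sum_negMulLog]
    exact (Finset.sum_subset (Finset.subset_univ s) fun a _ ha => by simp [hs a ha]).symm
  have hjensen := concaveOn_negMulLog.le_map_sum (t := s) (w := fun _ => (s.card : ℝ)⁻¹)
    (p := p) (fun _ _ => by positivity) (by simp [hcard.ne'])
    (fun a _ => Set.mem_Ici.2 (hp.1 a))
  have hlog : negMulLog (s.card : ℝ)⁻¹ = (s.card : ℝ)⁻¹ * log s.card := by
    simp [negMulLog, log_inv]
  simp only [smul_eq_mul, ← Finset.mul_sum, hsum, mul_one, hlog] at hjensen
  rw [hent]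
  exact le_of_mul_le_mul_left hjensen (inv_pos.2 hcard)

end Entropy

section Continuity

variable {α : Type*} [Fintype α] {p q : α → ℝ}

lemma IsDist.exists_convexComb_decomposition (hp : IsDist p) (hq : IsDist q) {T : ℝ}
    (hT : Vdist p q / 2 = T) (hT₀ : 0 < T) (hT₁ : T < 1) :
    ∃ u v r : α → ℝ, IsDist u ∧ IsDist v ∧ IsDist r ∧ (∃ a₀, u a₀ = 0) ∧
      p = (fun a => T * u a + (1 - T) * r a) ∧ q = (fun a => T * v a + (1 - T) * r a) := by
  have hpq : ∑ a, (p a - q a)⁺ = T := hT ▸ hp.sum_posPart_sub hq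
  have hqp : ∑ a, (q a - p a)⁺ = T := by rw [hq.sum_posPart_sub hp, Vdist_comm, hT]
  have hmin : ∑ a, min (p a) (q a) = 1 - T := by
    rw [← hp.2, ← hpq, eq_sub_iff_add_eq', ← Finset.sum_add_distrib]
    exact Finset.sum_congr rfl fun a _ => posPart_sub_add_min _ _
  have hT₁' : 0 < 1 - T := by linarith
  refine ⟨fun a => (p a - q a)⁺ / T, fun a => (q a - p a)⁺ / T,
    fun a => min (p a) (q a) / (1 - T),
    ⟨fun a => by positivity, by rw [← Finset.sum_div, hpq, div_self hT₀.ne']⟩,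
    ⟨fun a => by positivity, by rw [← Finset.sum_div, hqp, div_self hT₀.ne']⟩,
    ⟨fun a => div_nonneg (le_min (hp.1 a) (hq.1 a)) hT₁'.le,
      by rw [← Finset.sum_div, hmin, div_self hT₁'.ne']⟩, ?_, ?_, ?_⟩
  · obtain ⟨a₀, -, ha₀⟩ : ∃ a ∈ Finset.univ, (0 : ℝ) < (q a - p a)⁺ :=
      Finset.exists_lt_of_sum_lt (by simpa [hqp] using hT₀)
    refine ⟨a₀, show (p a₀ - q a₀)⁺ / T = 0 from ?_⟩
    rw [posPart_eq_zero.2 (by linarith [posPart_pos_iff.1 ha₀]), zero_div]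
  · ext a
    rw [mul_div_cancel₀ _ hT₀.ne', mul_div_cancel₀ _ hT₁'.ne', posPart_sub_add_min]
  · ext a
    rw [mul_div_cancel₀ _ hT₀.ne', mul_div_cancel₀ _ hT₁'.ne', min_comm,
      posPart_sub_add_min]

theorem entropy_sub_le_qaryEntropy (hp : IsDist p) (hq : IsDist q) (hT₁ : Vdist p q / 2 < 1) :
    entropy p - entropy q ≤ qaryEntropy (Fintype.card α) (Vdist p q / 2) := by
  obtain ⟨T, hT⟩ : ∃ T, Vdist p q / 2 = T := ⟨_, rfl⟩
  rw [hT] at hT₁ ⊢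
  rcases (hT ▸ div_nonneg (Vdist_nonneg p q) zero_le_two : 0 ≤ T).eq_or_lt with rfl | hT₀
  · rw [(Vdist_eq_zero_iff p q).1 (by linarith)]
    simp
  obtain ⟨u, v, r, hu, hv, hr, ⟨a₀, ha₀⟩, rfl, rfl⟩ :=
    hp.exists_convexComb_decomposition hq hT hT₀ hT₁
  classical
  have hcard : 1 ≤ Fintype.card α := Fintype.card_pos_iff.2 ⟨a₀⟩
  have hu_le : entropy u ≤ log ((Fintype.card α : ℤ) - 1 : ℤ) := by
    refine (entropy_le_log_card_of_support_subset hu (s := Finset.univ.erase a₀) ?_).trans_eq ?_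
    · intro a ha
      obtain rfl : a = a₀ := by simpa using ha
      exact ha₀
    · rw [Finset.card_erase_of_mem (Finset.mem_univ a₀), Finset.card_univ]
      push_cast [hcard]
      rfl
  have hp_le := entropy_convexComb_le hu hr hT₀.le hT₁.le
  have hq_ge := le_entropy_convexComb hv hr hT₀.le hT₁.le
  have hv_nonneg := entropy_nonneg hv
  rw [qaryEntropy]
  nlinarith

theorem abs_entropy_sub_le_qaryEntropy (hcard : 2 ≤ Fintype.card α) (hp : IsDist p)
    (hq : IsDist q) {s : ℝ} (hV : Vdist p q / 2 ≤ s) (hs : s ≤ 1 - 1 / Fintype.card α) :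
    |entropy p - entropy q| ≤ qaryEntropy (Fintype.card α) s := by
  have hs₁ : s < 1 := hs.trans_lt (sub_lt_self 1 (by positivity))
  have hmono (r t : α → ℝ) (hV : Vdist r t / 2 ≤ s) :
      qaryEntropy (Fintype.card α) (Vdist r t / 2) ≤ qaryEntropy (Fintype.card α) s :=
    (qaryEntropy_strictMonoOn hcard).monotoneOn
      ⟨div_nonneg (Vdist_nonneg r t) zero_le_two, hV.trans hs⟩
      ⟨(div_nonneg (Vdist_nonneg r t) zero_le_two).trans hV, hs⟩ hV
  rw [abs_sub_le_iff]
  exact ⟨(entropy_sub_le_qaryEntropy hp hq (by linarith)).trans (hmono p q hV),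
    (entropy_sub_le_qaryEntropy hq hp (by rw [Vdist_comm]; linarith)).trans
      (hmono q p (by rwa [Vdist_comm]))⟩

end Continuity

section Marginals

variable {Mx My : ℕ} {p q : Fin Mx × Fin My → ℝ}

lemma IsDist.margX (hp : IsDist p) : IsDist (margX p) :=
  ⟨fun _ => Finset.sum_nonneg fun _ _ => hp.1 _, by
    rw [← hp.2, Fintype.sum_prod_type]; rfl⟩

lemma IsDist.margY (hp : IsDist p) : IsDist (margY p) :=
  ⟨fun _ => Finset.sum_nonneg fun _ _ => hp.1 _, by
    rw [← hp.2, Fintype.sum_prod_type_right]; rfl⟩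

lemma Vdist_margX_le (p q : Fin Mx × Fin My → ℝ) :
    Vdist (margX p) (margX q) ≤ Vdist p q := by
  rw [Vdist, Vdist, Fintype.sum_prod_type]
  refine Finset.sum_le_sum fun i _ => ?_
  rw [margX, margX, ← Finset.sum_sub_distrib]
  exact Finset.abs_sum_le_sum_abs _ _

lemma Vdist_margY_le (p q : Fin Mx × Fin My → ℝ) :
    Vdist (margY p) (margY q) ≤ Vdist p q := by
  rw [Vdist, Vdist, Fintype.sum_prod_type_right]
  refine Finset.sum_le_sum fun j _ => ?_
  rw [margY, margY, ← Finset.sum_sub_distrib]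
  exact Finset.abs_sum_le_sum_abs _ _

theorem abs_mutInfo_sub_le (hMx : 2 ≤ Mx) (hMy : 2 ≤ My) (hp : IsDist p) (hq : IsDist q)
    {s : ℝ} (hV : Vdist p q / 2 ≤ s) (hsx : s ≤ 1 - 1 / Mx) (hsy : s ≤ 1 - 1 / My) :
    |mutInfo p - mutInfo q| ≤ qaryEntropy Mx s + qaryEntropy My s + qaryEntropy (Mx * My) s := by
  have hX := abs_entropy_sub_le_qaryEntropy (by simpa using hMx) hp.margX hq.margX
    ((div_le_div_of_nonneg_right (Vdist_margX_le p q) zero_le_two).trans hV) (by simpa using hsx)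
  have hY := abs_entropy_sub_le_qaryEntropy (by simpa using hMy) hp.margY hq.margY
    ((div_le_div_of_nonneg_right (Vdist_margY_le p q) zero_le_two).trans hV) (by simpa using hsy)
  have hcard : 2 ≤ Fintype.card (Fin Mx × Fin My) := by
    simp only [Fintype.card_prod, Fintype.card_fin]
    nlinarith
  have hsxy : s ≤ 1 - 1 / Fintype.card (Fin Mx × Fin My) := by
    simp only [Fintype.card_prod, Fintype.card_fin, Nat.cast_mul]
    have hMy' : (1 : ℝ) ≤ My := by exact_mod_cast hMy.trans' one_le_two
    have : 1 / ((Mx : ℝ) * My) ≤ 1 / Mx :=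
      one_div_le_one_div_of_le (by positivity) (le_mul_of_one_le_right (by positivity) hMy')
    linarith
  have hXY := abs_entropy_sub_le_qaryEntropy hcard hp hq hV hsxy
  simp only [Fintype.card_fin, Fintype.card_prod] at hX hY hXY
  rw [mutInfo, mutInfo]
  rw [abs_le] at hX hY hXY ⊢
  constructor <;> linarith

end Marginals

lemma qaryEntropy_add_qaryEntropy_add_qaryEntropy_mul {Mx My : ℕ} (hMx : 2 ≤ Mx)
    (hMy : 2 ≤ My) (s : ℝ) :
    qaryEntropy Mx s + qaryEntropy My s + qaryEntropy (Mx * My) s =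
      s * log (((Mx : ℝ) * My - 1) * ((Mx : ℝ) - 1) * ((My : ℝ) - 1)) + 3 * binEnt s := by
  have hMx' : (2 : ℝ) ≤ Mx := by exact_mod_cast hMx
  have hMy' : (2 : ℝ) ≤ My := by exact_mod_cast hMy
  have hMxMy : (0 : ℝ) < Mx * My - 1 := by nlinarith
  simp only [qaryEntropy, binEnt_eq_binEntropy]
  push_cast
  rw [log_mul (mul_pos hMxMy (by linarith)).ne' (by linarith), log_mul hMxMy.ne' (by linarith)]
  ring

section Empirical

variable {α : Type*} [Fintype α] [DecidableEq α] {Ω : Type*} {n : ℕ}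

lemma natCast_mul_sum_empDist (Z : Fin n → Ω → α) (ω : Ω) (hn : n ≠ 0) (A : Finset α) :
    n * ∑ a ∈ A, empDist Z ω a = ∑ k, (A : Set α).indicator 1 (Z k ω) := by
  have hn' : (n : ℝ) ≠ 0 := Nat.cast_ne_zero.2 hn
  simp only [empDist, ← Finset.sum_div, mul_div_cancel₀ _ hn',
    Finset.card_filter, Nat.cast_sum, Nat.cast_ite, Nat.cast_one, Nat.cast_zero]
  rw [Finset.sum_comm]
  simp [Set.indicator_apply]

lemma isDist_empDist (Z : Fin n → Ω → α) (ω : Ω) (hn : n ≠ 0) :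
    IsDist (empDist Z ω) := by
  refine ⟨fun a => by unfold empDist; positivity, ?_⟩
  have := natCast_mul_sum_empDist Z ω hn Finset.univ
  simp only [Finset.coe_univ, Set.indicator_univ, Pi.one_apply, Finset.sum_const,
    Finset.card_univ, Fintype.card_fin, nsmul_eq_mul, mul_one] at this
  exact (mul_eq_left₀ (Nat.cast_ne_zero.2 hn)).1 this

end Empirical

lemma IsDist.exists_finset_lt_sum_sub {α : Type*} [Fintype α] [DecidableEq α] {p q : α → ℝ}
    (hp : IsDist p) (hq : IsDist q) {ε : ℝ} (hε : 0 ≤ ε) (h : ε < Vdist q p) :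
    ∃ A ∈ (Finset.univ \ {∅, Finset.univ} : Finset (Finset α)),
      ε / 2 < ∑ a ∈ A, (q a - p a) := by
  have hA : ∑ a ∈ Finset.univ.filter (fun a => p a < q a), (q a - p a) = Vdist q p / 2 := by
    rw [← hq.sum_posPart_sub hp, Finset.sum_filter]
    refine Finset.sum_congr rfl fun a _ => ?_
    split_ifs with ha
    · exact (posPart_eq_self.2 (by linarith)).symm
    · exact (posPart_eq_zero.2 (by linarith)).symm
  refine ⟨_, ?_, by rw [hA]; linarith⟩
  simp only [Finset.mem_sdiff, Finset.mem_univ, Finset.mem_insert, Finset.mem_singleton,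
    true_and, not_or]
  constructor
  · rintro h'
    rw [h', Finset.sum_empty] at hA
    linarith
  · rintro h'
    rw [h', Finset.sum_sub_distrib, hq.2, hp.2, sub_self] at hA
    linarith

lemma card_finset_sdiff_empty_univ {α : Type*} [Fintype α] [DecidableEq α] [Nonempty α] :
    ((Finset.univ \ {∅, Finset.univ} : Finset (Finset α)).card : ℝ) =
      2 ^ Fintype.card α - 2 := by
  rw [Finset.card_univ_sdiff, Finset.card_pair Finset.univ_nonempty.ne_empty.symm,
    Fintype.card_finset, Nat.cast_sub, Nat.cast_pow, Nat.cast_ofNat]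
  calc 2 = 2 ^ 1 := rfl
    _ ≤ 2 ^ Fintype.card α := Nat.pow_le_pow_right two_pos Fintype.card_pos

section Sampling

open ProbabilityTheory

lemma distMeasure_real_finset {τ : Type*} [Fintype τ] [MeasurableSpace τ]
    [MeasurableSingletonClass τ] {p : τ → ℝ} (hp : ∀ a, 0 ≤ p a) (A : Finset τ) :
    (distMeasure p).real A = ∑ a ∈ A, p a := by
  classical
  rw [measureReal_def, distMeasure, Measure.finsetSum_apply]
  simp only [Measure.smul_apply, Measure.dirac_apply' _ A.measurableSet]
  simp only [Set.indicator_apply, SetLike.mem_coe, Pi.one_apply, smul_eq_mul, mul_ite, mul_one,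
    mul_zero, Finset.sum_ite_mem, Finset.univ_inter]
  rw [← ENNReal.ofReal_sum_of_nonneg fun a _ => hp a,
    ENNReal.toReal_ofReal (Finset.sum_nonneg fun a _ => hp a)]

theorem measureReal_sum_indicator_sub_ge_le {Ω β : Type*} [MeasurableSpace Ω]
    {μ : Measure Ω} [IsProbabilityMeasure μ] [MeasurableSpace β] {ν : Measure β} {n : ℕ}
    {Z : Fin n → Ω → β} (hmeas : ∀ k, Measurable (Z k)) (hindep : iIndepFun Z μ)
    (hdist : ∀ k, μ.map (Z k) = ν) {A : Set β} (hA : MeasurableSet A) {t : ℝ}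
    (ht : 0 ≤ t) :
    μ.real {ω | t ≤ ∑ k, (A.indicator 1 (Z k ω) - ν.real A)} ≤ exp (-2 * t ^ 2 / n) := by
  set X : Fin n → Ω → ℝ := fun k ω => A.indicator 1 (Z k ω)
  have hXmeas (k : Fin n) : Measurable (X k) := (measurable_one.indicator hA).comp (hmeas k)
  have hXmean (k : Fin n) : μ[X k] = ν.real A := by
    rw [← hdist k, ← integral_indicator_one hA, integral_map (hmeas k).aemeasurable
      (measurable_one.indicator hA).aestronglyMeasurable]
  have hsubG (k : Fin n) :
      HasSubgaussianMGF (fun ω => X k ω - ν.real A) ((‖(1 : ℝ) - 0‖₊ / 2) ^ 2) μ :=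
    hXmean k ▸ hasSubgaussianMGF_of_mem_Icc (hXmeas k).aemeasurable (ae_of_all _ fun ω => by
      by_cases h : Z k ω ∈ A <;> simp [X, h])
  have hindepX : iIndepFun (fun k ω => X k ω - ν.real A) μ :=
    hindep.comp (fun _ b => A.indicator 1 b - ν.real A) fun _ =>
      (measurable_one.indicator hA).sub_const _
  have := HasSubgaussianMGF.measure_sum_ge_le_of_iIndepFun hindepX (s := Finset.univ)
    (fun k _ => hsubG k) ht
  have hvar : ((∑ _k : Fin n, (‖(1 : ℝ) - 0‖₊ / 2) ^ 2 : NNReal) : ℝ) = n / 4 := by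
    simp only [sub_zero, nnnorm_one, Finset.sum_const, Finset.card_univ, Fintype.card_fin,
      nsmul_eq_mul, NNReal.coe_mul, NNReal.coe_natCast, NNReal.coe_pow, NNReal.coe_div,
      NNReal.coe_one, NNReal.coe_ofNat]
    ring
  rw [hvar] at this
  convert this using 2
  ring

theorem measureReal_lt_Vdist_empDist_le {α : Type*} [Fintype α] [DecidableEq α]
    [MeasurableSpace α] [MeasurableSingletonClass α] {p : α → ℝ} (hp : IsDist p)
    {Ω : Type*} [MeasurableSpace Ω] {μ : Measure Ω} [IsProbabilityMeasure μ] {n : ℕ}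
    {Z : Fin n → Ω → α} (hmeas : ∀ k, Measurable (Z k)) (hindep : iIndepFun Z μ)
    (hdist : ∀ k, μ.map (Z k) = distMeasure p) (hn : n ≠ 0) {ε : ℝ} (hε : 0 ≤ ε) :
    μ.real {ω | ε < Vdist (empDist Z ω) p} ≤
      (2 ^ Fintype.card α - 2) * exp (-n * ε ^ 2 / 2) := by
  have := hp.nonempty
  set S : Finset (Finset α) := Finset.univ \ {∅, Finset.univ}
  set E : Finset α → Set Ω := fun A =>
    {ω | n * ε / 2 ≤ ∑ k, ((A : Set α).indicator 1 (Z k ω) - (distMeasure p).real A)}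
  have hsub : {ω | ε < Vdist (empDist Z ω) p} ⊆ ⋃ A ∈ S, E A := by
    intro ω hω
    obtain ⟨A, hAS, hA⟩ := hp.exists_finset_lt_sum_sub (isDist_empDist Z ω hn) hε hω
    refine Set.mem_biUnion hAS ?_
    have hn' : (0 : ℝ) < n := Nat.cast_pos.2 (Nat.pos_of_ne_zero hn)
    show n * ε / 2 ≤ ∑ k, ((A : Set α).indicator 1 (Z k ω) - (distMeasure p).real A)
    rw [Finset.sum_sub_distrib, ← natCast_mul_sum_empDist Z ω hn, distMeasure_real_finset hp.1,
      Finset.sum_const, Finset.card_univ, Fintype.card_fin, nsmul_eq_mul, ← mul_sub,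
      ← Finset.sum_sub_distrib]
    nlinarith
  have hE (A : Finset α) : μ.real (E A) ≤ exp (-n * ε ^ 2 / 2) := by
    refine (measureReal_sum_indicator_sub_ge_le hmeas hindep hdist A.measurableSet
      (by positivity)).trans_eq ?_
    congr 1
    field_simp
  calc μ.real {ω | ε < Vdist (empDist Z ω) p}
      ≤ ∑ A ∈ S, μ.real (E A) :=
        (measureReal_mono hsub (measure_ne_top μ _)).trans (measureReal_biUnion_finset_le S E)
    _ ≤ ∑ _A ∈ S, exp (-n * ε ^ 2 / 2) := Finset.sum_le_sum fun A _ => hE A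
    _ = (2 ^ Fintype.card α - 2) * exp (-n * ε ^ 2 / 2) := by
      rw [Finset.sum_const, nsmul_eq_mul, card_finset_sdiff_empty_univ]

end Sampling

lemma mul_exp_neg_le_of_log_div_le {c a x : ℝ} (hc : 0 < c) (ha : 0 < a)
    (hx : log (c / a) ≤ x) :
    c * exp (-x) ≤ a :=
  calc c * exp (-x) ≤ c * exp (-log (c / a)) := by gcongr
    _ = a := by rw [exp_neg, exp_log (div_pos hc ha), inv_div, mul_div_cancel₀ _ hc.ne']

theorem mutInfo_confidence_sample_size_general {Mx My : ℕ} (hMx : 2 ≤ Mx) (hMxy : Mx ≤ My)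
    (p : Fin Mx × Fin My → ℝ) (hp : IsDist p)
    (α : ℝ) (hα : α ∈ Set.Ioc (0 : ℝ) 1)
    (γ : ℝ)
    (ε : ℝ) (hεmem : ε ∈ Set.Ioo (0 : ℝ) (2 - 2 / (Mx : ℝ)))
    (hroot : ε / 2 * Real.log (((Mx : ℝ) * My - 1) * ((Mx : ℝ) - 1) * ((My : ℝ) - 1)) +
        3 * binEnt (ε / 2) = γ)
    {Ω : Type*} [MeasurableSpace Ω] (μ : Measure Ω) [IsProbabilityMeasure μ]
    {n : ℕ} (hn : (n : ℝ) ≥ 2 / ε ^ 2 * Real.log (((2 : ℝ) ^ (Mx * My) - 2) / α))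
    (Z : Fin n → Ω → Fin Mx × Fin My)
    (hmeas : ∀ k, Measurable (Z k))
    (hindep : ProbabilityTheory.iIndepFun Z μ)
    (hdist : ∀ k, Measure.map (Z k) μ = distMeasure p) :
    (μ {ω | mutInfo (empDist Z ω) - γ ≤ mutInfo p ∧
            mutInfo p ≤ mutInfo (empDist Z ω) + γ}).toReal ≥ 1 - α := by
  obtain ⟨hα₀, hα₁⟩ := hα
  have hMy : 2 ≤ My := hMx.trans hMxy
  have hsx : ε / 2 ≤ 1 - 1 / Mx := by linarith [hεmem.2, mul_one_div (2 : ℝ) Mx]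
  have hsy : ε / 2 ≤ 1 - 1 / My := hsx.trans (by gcongr)
  have hsets : (1 : ℝ) < 2 ^ (Mx * My) - 2 := by
    have : (2 : ℝ) ^ 2 ≤ 2 ^ (Mx * My) := pow_le_pow_right₀ one_le_two (by nlinarith)
    norm_num at this
    linarith
  have hlog : log ((2 ^ (Mx * My) - 2) / α) ≤ n * ε ^ 2 / 2 := by
    rw [ge_iff_le, div_mul_eq_mul_div, div_le_iff₀ (pow_pos hεmem.1 2)] at hn
    linarith
  have hn0 : n ≠ 0 := by
    rintro rfl
    linarith [log_pos ((one_lt_div hα₀).2 (by linarith) : 1 < (2 ^ (Mx * My) - 2) / α)]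
  set B := {ω | ε < Vdist (empDist Z ω) p}
  have hgood : Bᶜ ⊆ {ω | mutInfo (empDist Z ω) - γ ≤ mutInfo p ∧
      mutInfo p ≤ mutInfo (empDist Z ω) + γ} := fun ω hω => by
    have := abs_mutInfo_sub_le hMx hMy (isDist_empDist Z ω hn0) hp
      (div_le_div_of_nonneg_right (not_lt.1 hω) zero_le_two) hsx hsy
    rw [qaryEntropy_add_qaryEntropy_add_qaryEntropy_mul hMx hMy, hroot, abs_sub_le_iff] at this
    exact ⟨by linarith, by linarith⟩
  have hbad : μ.real B ≤ α := by
    refine (measureReal_lt_Vdist_empDist_le hp hmeas hindep hdist hn0 hεmem.1.le).trans ?_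
    rw [Fintype.card_prod, Fintype.card_fin, Fintype.card_fin, neg_mul, neg_div]
    exact mul_exp_neg_le_of_log_div_le (by linarith) hα₀ hlog
  have hunion : 1 ≤ μ.real B + μ.real Bᶜ := by
    simpa using measureReal_union_le (μ := μ) B Bᶜ
  rw [ge_iff_le, ← measureReal_def]
  linarith [measureReal_mono hgood (measure_ne_top μ _)]

/-- Theorem 3: sample-size bound. If `ε` is the unique root in
`(0, 2 - 2/Mx)` of `(ε/2)·log[(Mx·My-1)(Mx-1)(My-1)] + 3·ℋ(ε/2) = γ` and the sample size
satisfies `n ≥ (2/ε²)·ln((2^(Mx·My)-2)/α)`, then `[I(p̂_n) - γ, I(p̂_n) + γ]` contains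
`I(p)` with probability at least `1 - α`. -/
theorem mutInfo_confidence_sample_size {Mx My : ℕ} (hMx : 2 ≤ Mx) (hMxy : Mx ≤ My)
    (p : Fin Mx × Fin My → ℝ) (hp : IsDist p)
    (α : ℝ) (hα : α ∈ Set.Ioc (0 : ℝ) 1)
    (γ : ℝ) (hγ : γ ∈ Set.Ioo 0 (Real.log (Mx : ℝ)))
    (ε : ℝ) (hεmem : ε ∈ Set.Ioo (0 : ℝ) (2 - 2 / (Mx : ℝ)))
    (hroot : ε / 2 * Real.log (((Mx : ℝ) * My - 1) * ((Mx : ℝ) - 1) * ((My : ℝ) - 1)) +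
        3 * binEnt (ε / 2) = γ)
    {Ω : Type*} [MeasurableSpace Ω] (μ : Measure Ω) [IsProbabilityMeasure μ]
    {n : ℕ} (hn : (n : ℝ) ≥ 2 / ε ^ 2 * Real.log (((2 : ℝ) ^ (Mx * My) - 2) / α))
    (Z : Fin n → Ω → Fin Mx × Fin My)
    (hmeas : ∀ k, Measurable (Z k))
    (hindep : ProbabilityTheory.iIndepFun Z μ)
    (hdist : ∀ k, Measure.map (Z k) μ = distMeasure p) :
    (μ {ω | mutInfo (empDist Z ω) - γ ≤ mutInfo p ∧
            mutInfo p ≤ mutInfo (empDist Z ω) + γ}).toReal ≥ 1 - α :=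
  mutInfo_confidence_sample_size_general hMx hMxy p hp α hα γ ε hεmem hroot μ hn Z hmeas hindep
    hdist
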